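/- Suppose F_0, F_1 ∈ C(Y, Z) are M-homotopic via H ∈ C(Y × M, Z). Then the chain maps F_0^*, F_1^* : C_•^M(Z, X) → C_•^M(Y, X) are chain homotopic, via K : C_n^M(Z, X) → C_{n+1}^M(Y, X) given by K(σ) = H^*(σ) regarded as an element of C_{n+1}^M(Y, X), satisfying dK = F_0^* − F_1^* ± Kd. In particular F_0^* = F_1^* on H_•^M(Z, X). -/
import Mathlib


/-- The sign `(−1)^{ε+i}` of the cubical face `d^{i,ε}`. -/
def cubSign (ε : Bool) (i : ℕ) : ℤ := (if ε then (-1 : ℤ) else 1) * (-1) ^ i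

/-- If `F_0, F_1 ∈ C(Y, Z)` are `M`-homotopic via `H ∈ C(Y × M, Z)`, then the chain maps
`F_0^*, F_1^* : C_•^M(Z, X) → C_•^M(Y, X)` are chain homotopic via
`K σ = H^*(σ) ∈ C(Y × M × M^n, X) = C_{n+1}^M(Y, X)`: explicitly
`d(Kσ) + K(dσ) = F_0^*σ − F_1^*σ`, so `F_0^* = F_1^*` on `H_•^M(Z, X)`.

Abstractly, `C n = C_n^M(Z, X)`, `C' n = C_n^M(Y, X)` with cubical face maps `D`, `D'`;
`K n = H^*` lands in degree `n+1`, its face in the extra (first) `M`-factor at `p_0`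
(resp. `p_1`) is `F_0^*` (resp. `F_1^*`) since `H ∘ i_0 = F_0`, `H ∘ i_1 = F_1`, and its
faces in the remaining factors are the shifted faces of `σ`. -/
theorem M_homotopy_chain_homotopy_pullback
    {C C' : ℕ → Type*} [∀ n, AddCommGroup (C n)] [∀ n, AddCommGroup (C' n)]
    (D : ∀ n, Fin (n + 1) → Bool → C (n + 1) →+ C n)
    (D' : ∀ n, Fin (n + 1) → Bool → C' (n + 1) →+ C' n)
    (F0 F1 : ∀ n, C n →+ C' n)
    (K : ∀ n, C n →+ C' (n + 1))
    (h0 : ∀ (n : ℕ) (σ : C n), D' n 0 false (K n σ) = F0 n σ)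
    (h1 : ∀ (n : ℕ) (σ : C n), D' n 0 true (K n σ) = F1 n σ)
    (hsh : ∀ (n : ℕ) (i : Fin (n + 1)) (ε : Bool) (σ : C (n + 1)),
      D' (n + 1) i.succ ε (K (n + 1) σ) = K n (D n i ε σ))
    (n : ℕ) (σ : C (n + 1)) :
    (∑ ε : Bool, ∑ i : Fin (n + 2), cubSign ε i • D' (n + 1) i ε (K (n + 1) σ))
      + K n (∑ ε : Bool, ∑ i : Fin (n + 1), cubSign ε i • D n i ε σ)
      = F0 (n + 1) σ - F1 (n + 1) σ := by
  have key : ∀ ε : Bool,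
      (∑ i : Fin (n + 2), cubSign ε i • D' (n + 1) i ε (K (n + 1) σ))
        = cubSign ε 0 • D' (n + 1) 0 ε (K (n + 1) σ)
          - ∑ i : Fin (n + 1), cubSign ε i • K n (D n i ε σ) := by
    intro ε
    rw [Fin.sum_univ_succ, sub_eq_add_neg, ← Finset.sum_neg_distrib]
    congr 1
    apply Finset.sum_congr rfl
    intro i _
    rw [hsh]
    have hsgn : cubSign ε ((i.succ : Fin (n + 2)) : ℕ) = - cubSign ε i := by
      simp only [Fin.val_succ, cubSign, pow_succ]
      ring
    rw [hsgn, neg_smul]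
  simp only [key]
  have hKs : K n (∑ ε : Bool, ∑ i : Fin (n + 1), cubSign ε i • D n i ε σ)
      = ∑ ε : Bool, ∑ i : Fin (n + 1), cubSign ε i • K n (D n i ε σ) := by
    rw [map_sum]
    refine Finset.sum_congr rfl fun ε _ => ?_
    rw [map_sum]
    exact Finset.sum_congr rfl fun i _ => map_zsmul _ _ _
  rw [hKs, Fintype.sum_bool, Fintype.sum_bool]
  simp only [Fin.val_zero, cubSign, pow_zero, mul_one, if_true, if_false, one_smul, neg_smul]
  rw [h0, h1]
  have hif : (if false = true then (-1:ℤ) else 1) = 1 := rfl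
  rw [hif]
  simp only [one_smul, one_mul]
  abel
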